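/- Fix r ≤ m̃/2. Sample a forest uniformly from F_{s̃}, and let X₁,…,X_{z̃} denote the children counts of the roots. For any exponents σ₁,…,σ_r ≥ 1 and distinct indices j₁ < … < j_r ≤ z̃, E[X_{j₁}^{σ₁}·…·X_{j_r}^{σ_r}] ≤ r·2^r·(Σ_i i²s̃_i/m̃)^r·(1 + Δ̃/z̃)·Δ̃^{σ₁+…+σ_r−r}. -/

import Mathlib

open scoped BigOperators Classical
open Filter MeasureTheory

namespace Paper

inductive PlaneTree : Type
  | node : List PlaneTree → PlaneTree

namespace PlaneTree

def deg : PlaneTree → ℕ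
  | node ts => ts.length

mutual
  def pos : PlaneTree → List (List ℕ)
    | node ts => [] :: posF 0 ts
  def posF : ℕ → List PlaneTree → List (List ℕ)
    | _, [] => []
    | i, t :: ts => (pos t).map (fun q => i :: q) ++ posF (i + 1) ts
end

mutual
  def dfsDeg : PlaneTree → List ℕ
    | node ts => ts.length :: dfsDegF ts
  def dfsDegF : List PlaneTree → List ℕ
    | [] => []
    | t :: ts => dfsDeg t ++ dfsDegF ts
end

def subtreeAt : PlaneTree → List ℕ → Option PlaneTree
  | t, [] => some t
  | node ts, i :: p =>
    match ts[i]? with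
    | some t' => subtreeAt t' p
    | none => none

def numChild (t : PlaneTree) (p : List ℕ) : ℕ := ((subtreeAt t p).map deg).getD 0

def IsVertex (t : PlaneTree) (p : List ℕ) : Prop := (subtreeAt t p).isSome

def IsLeaf (t : PlaneTree) (p : List ℕ) : Prop := (subtreeAt t p).isSome ∧ numChild t p = 0

/-- number of vertices of `t` having exactly `i` children (empirical children distribution) -/
def ecd (t : PlaneTree) (i : ℕ) : ℕ :=
  ((pos t).filter fun p => decide (numChild t p = i)).length

/-- ECD of a plane forest with ranked roots -/
def ecdF (f : List PlaneTree) (i : ℕ) : ℕ := (f.map fun t => ecd t i).sum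

/-- number of children of the `j`-th root of a forest -/
def rootDeg (f : List PlaneTree) (j : ℕ) : ℕ := deg (f.getD j (node []))

/-- the set of plane forests with ranked roots with ECD `s` -/
def forestSet (s : ℕ → ℕ) : Set (List PlaneTree) := {f | ∀ i, ecdF f i = s i}

/-- the set of plane trees with ECD `s` -/
def treeSet (s : ℕ → ℕ) : Set PlaneTree := {t | ∀ i, ecd t i = s i}

/-- strict depth-first (preorder) order on positions -/
def dfLT (p q : List ℕ) : Prop := List.Lex (· < ·) p q

def parent (p : List ℕ) : List ℕ := p.dropLast

/-- `q` is a strict ancestor of `p`, i.e. `q ∈ [ρ, p)` -/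
def StrictAnc (q p : List ℕ) : Prop := q <+: p ∧ q ≠ p

/-- admissible (ordered) pair of leaves -/
def Admissible (t : PlaneTree) (u v : List ℕ) : Prop :=
  IsLeaf t u ∧ IsLeaf t v ∧ 2 ≤ v.length ∧
    StrictAnc (parent (parent v)) (parent u) ∧ dfLT (parent u) (parent v)

def ASet (t : PlaneTree) : Set (List ℕ × List ℕ) := {uv | Admissible t uv.1 uv.2}

def fA (t : PlaneTree) (u : List ℕ) : Set (List ℕ) := {v | Admissible t u v}

def B2 (t : PlaneTree) (u : List ℕ) : Set (List ℕ) :=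
  {v | IsVertex t v ∧ 2 ≤ v.length ∧ StrictAnc (parent (parent v)) u}

noncomputable def leafFinset (t : PlaneTree) : Finset (List ℕ) :=
  ((pos t).toFinset).filter fun p => IsLeaf t p

def leafOf {k : ℕ} (w : Fin k → List ℕ × List ℕ) (y : Fin k × Bool) : List ℕ :=
  if y.2 then (w y.1).1 else (w y.1).2

/-- ordered `k`-tuples of admissible pairs using `2k` distinct leaves -/
def AkOrd (t : PlaneTree) (k : ℕ) : Set (Fin k → List ℕ × List ℕ) :=
  {w | (∀ a, Admissible t (w a).1 (w a).2) ∧ Function.Injective (leafOf w)}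

/-- unordered collections of `k` admissible pairs using `2k` distinct leaves -/
def Ak (t : PlaneTree) (k : ℕ) : Set (Finset (List ℕ × List ℕ)) :=
  {x | x.card = k ∧ (∀ uv ∈ x, Admissible t uv.1 uv.2) ∧
    Set.InjOn (fun y : (List ℕ × List ℕ) × Bool => if y.2 then y.1.1 else y.1.2)
      {y | y.1 ∈ x}}

/-- the set `T_s^(k)` of pairs of a plane tree with ECD `s` and a set of `k` admissible pairs -/
def Tsk (s : ℕ → ℕ) (k : ℕ) : Set (PlaneTree × Finset (List ℕ × List ℕ)) :=
  {tx | (∀ i, ecd tx.1 i = s i) ∧ tx.2 ∈ Ak tx.1 k}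

end PlaneTree

/-- labeled plane trees -/
inductive LTree : Type
  | node : ℕ → List LTree → LTree

namespace LTree

mutual
  def shape : LTree → PlaneTree
    | node _ ts => .node (shapeF ts)
  def shapeF : List LTree → List PlaneTree
    | [] => []
    | t :: ts => shape t :: shapeF ts
end

mutual
  def dfsLab : LTree → List ℕ
    | node a ts => a :: dfsLabF ts
  def dfsLabF : List LTree → List ℕ
    | [] => []
    | t :: ts => dfsLab t ++ dfsLabF ts
end

mutual
  def dfsDeg : LTree → List ℕ
    | node _ ts => ts.length :: dfsDegF ts
  def dfsDegF : List LTree → List ℕ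
    | [] => []
    | t :: ts => dfsDeg t ++ dfsDegF ts
end

def subtreeAt : LTree → List ℕ → Option LTree
  | t, [] => some t
  | node _ ts, i :: p =>
    match ts[i]? with
    | some t' => subtreeAt t' p
    | none => none

def labelAt (t : LTree) (p : List ℕ) : ℕ :=
  ((subtreeAt t p).map fun u => match u with | node a _ => a).getD 0

end LTree

/-- partial-sum steps of the permuted walk -/
def steps {m : ℕ} (c : Fin m → ℕ) (π : Equiv.Perm (Fin m)) : List ℤ :=
  List.ofFn fun i => (c (π i) : ℤ) - 1

/-- first index `j ∈ [1, length]` at which the partial sums attain their minimum -/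
noncomputable def firstMinIdx (l : List ℤ) : ℕ :=
  WithTop.untopD 0 ((Finset.Icc 1 l.length).filter fun j =>
      ∀ j' ∈ Finset.Icc 1 l.length, (l.take j).sum ≤ (l.take j').sum).min

/-- the DFS vertex sequence obtained by rotating the uniformly permuted vertex
sequence at the first minimum of its Łukasiewicz-type walk (Vervaat transform) -/
noncomputable def rotSeq {m : ℕ} (c : Fin m → ℕ) (π : Equiv.Perm (Fin m)) : List (Fin m) :=
  (List.ofFn fun i => π i).rotate (firstMinIdx (steps c π))

/-- the degree of a vertex in a (simple) edge set -/
def degIn (E : Finset (Sym2 ℕ)) (v : ℕ) : ℕ := (E.filter fun e => v ∈ e).card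

/-- degree of a vertex in a multigraph given by an edge multiset (loops count twice) -/
def mdeg (E : Multiset (Sym2 ℕ)) (v : ℕ) : ℕ :=
  (E.map fun e => (if v ∈ e then 1 else 0) + (if e = s(v, v) then 1 else 0)).sum

/-- connectivity of a (multi)graph on vertex set `V` with edges `E` -/
def ConnOn (V : Finset ℕ) (E : Set (Sym2 ℕ)) : Prop :=
  ∀ a ∈ V, ∀ b ∈ V, Relation.ReflTransGen (fun a b => s(a, b) ∈ E) a b

/-- the set of simple connected labeled graphs on `{1, …, m}` with degree sequence `d` -/
def GconSet (m : ℕ) (d : ℕ → ℕ) : Set (Finset (Sym2 ℕ)) :=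
  {E | (∀ e ∈ E, ¬ e.IsDiag) ∧ (∀ e ∈ E, ∀ v ∈ e, v ∈ Finset.Icc 1 m) ∧
       (∀ v ∈ Finset.Icc 1 m, degIn E v = d v) ∧ ConnOn (Finset.Icc 1 m) (E : Set (Sym2 ℕ))}

/-- ECD of the children sequence `(d̃₂ − 1, …, d̃_{m̃} − 1, 0, …, 0)` (with `2k` zeros) -/
def ecdFromDeg (m k : ℕ) (d : ℕ → ℕ) (i : ℕ) : ℕ :=
  ((Finset.Icc 2 m).filter fun j => d j = i + 1).card + if i = 0 then 2 * k else 0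

/-- `≪` order on admissible pairs -/
def pairLT (a b : List ℕ × List ℕ) : Prop :=
  PlaneTree.dfLT (PlaneTree.parent a.1) (PlaneTree.parent b.1) ∨
    (PlaneTree.parent a.1 = PlaneTree.parent b.1 ∧
      PlaneTree.dfLT (PlaneTree.parent a.2) (PlaneTree.parent b.2))

/-- labeled elements of `T_s^(k)` as in the sampling algorithm: a labeled plane tree whose
labels are `{2, …, m̃ + 2k}`, in which the vertex labeled `j ≤ m̃` has `d̃_j − 1` children and
the vertices labeled `> m̃` are leaves, together with a `≪`-increasing tuple of `k` admissible
pairs of leaves with distinct leaves, the `j`-th pair carrying labels `(m̃+2j−1, m̃+2j)`. -/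
def IsLabeledElement (m k : ℕ) (d : ℕ → ℕ) (t : LTree)
    (x : Fin k → List ℕ × List ℕ) : Prop :=
  (LTree.dfsLab t).Perm (List.range' 2 (m - 1 + 2 * k)) ∧
  (∀ p ∈ PlaneTree.pos (LTree.shape t),
    PlaneTree.numChild (LTree.shape t) p =
      (if 2 ≤ LTree.labelAt t p ∧ LTree.labelAt t p ≤ m then d (LTree.labelAt t p) - 1 else 0)) ∧
  (∀ j, PlaneTree.Admissible (LTree.shape t) (x j).1 (x j).2) ∧
  Function.Injective (PlaneTree.leafOf x) ∧
  (∀ j j' : Fin k, j < j' → pairLT (x j) (x j')) ∧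
  (∀ j : Fin k, LTree.labelAt t (x j).1 = m + 2 * (j : ℕ) + 1 ∧
      LTree.labelAt t (x j).2 = m + 2 * (j : ℕ) + 2)

/-- the edge multiset of the graph `I(t, x)`: tree edges, with the leaves of the admissible
pairs deleted and an edge joining the two parents of each admissible pair added -/
noncomputable def Iedges (t : LTree) {k : ℕ} (x : Fin k → List ℕ × List ℕ) :
    Multiset (Sym2 ℕ) :=
  (↑(((PlaneTree.pos (LTree.shape t)).filter fun p =>
        decide (p ≠ ([] : List ℕ) ∧ ∀ j, p ≠ (x j).1 ∧ p ≠ (x j).2)).map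
      fun p => s(LTree.labelAt t (PlaneTree.parent p), LTree.labelAt t p)) : Multiset (Sym2 ℕ))
  + ↑(List.ofFn fun j =>
      s(LTree.labelAt t (PlaneTree.parent (x j).1), LTree.labelAt t (PlaneTree.parent (x j).2)))

/- Brownian excursion: Gaussian/Bessel kernels and finite-dimensional densities -/
noncomputable def gaussD (s x : ℝ) : ℝ := Real.exp (-(x ^ 2) / (2 * s)) / Real.sqrt (2 * Real.pi * s)

noncomputable def killedK (s x y : ℝ) : ℝ := gaussD s (y - x) - gaussD s (y + x)

noncomputable def bes3K (s x y : ℝ) : ℝ := (y / x) * killedK s x y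

noncomputable def exStart (t x : ℝ) : ℝ :=
  Real.sqrt (2 / Real.pi) * x ^ 2 * t ^ (-(3 : ℝ) / 2) * Real.exp (-(x ^ 2) / (2 * t))

noncomputable def exEnd (s x : ℝ) : ℝ := (2 / s) * gaussD s x

/-- finite-dimensional density of the standard Brownian excursion at times `t 0 < … < t n` -/
noncomputable def exFdd {n : ℕ} (t : Fin (n + 1) → ℝ) (x : Fin (n + 1) → ℝ) : ℝ :=
  if ∀ i, 0 < x i then
    Real.sqrt (Real.pi / 2) * exStart (t 0) (x 0) *
      (∏ i : Fin n, bes3K (t i.succ - t i.castSucc) (x i.castSucc) (x i.succ)) *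
      exEnd (1 - t (Fin.last n)) (x (Fin.last n))
  else 0

/-- `e` is a standard Brownian excursion on `[0,1]`: continuous nonnegative paths vanishing at
the endpoints, positive inside, with the excursion finite-dimensional densities. -/
def IsStdBrownianExcursion {Ω : Type*} [MeasureSpace Ω] (e : Ω → ℝ → ℝ) : Prop :=
  (∀ ω, Continuous (e ω)) ∧ (∀ ω, e ω 0 = 0) ∧ (∀ ω, e ω 1 = 0) ∧
  (∀ ω, ∀ x ∈ Set.Ioo (0 : ℝ) 1, 0 < e ω x) ∧
  (∀ t : ℝ, Measurable fun ω => e ω t) ∧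
  ∀ (n : ℕ) (t : Fin (n + 1) → ℝ), StrictMono t → 0 < t 0 → t (Fin.last n) < 1 →
    Measure.map (fun ω i => e ω (t i)) (volume : Measure Ω)
      = volume.withDensity fun x => ENNReal.ofReal (exFdd t x)

/-- `j`-th smallest value (0-based) among `ω 0, …, ω (m−1)` -/
noncomputable def orderStat {m : ℕ} (ω : Fin m → ℝ) (j : ℕ) : ℝ :=
  ((Multiset.map ω Finset.univ.val).sort (· ≤ ·)).getD j 0

end Paper

/-!
Removing the `q`-th root of a forest whose root has `i` children, and appending its subtrees as
new last roots, is a bijection from the forests with ECD `s` whose `q`-th root has degree `i` onto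
the forests with ECD `s - δᵢ`. Induction on the number of vertices turns this into the count
`|F_s| · ∏ᵥ sᵥ! = z (m - 1)!`. Peeling off the roots `j₁ < ⋯ < j_r` one after the other, the event
`{X_{j_a} = d_a for all a}` is in bijection with `F_{s - c}`, where `c` records the multiplicities
of the values `d_a`; comparing the two counts gives
`P(X_j = d) ≤ r 2^r (1 + Δ/z) ∏ₐ s_{d_a} / m^r`. Summed against `∏ₐ d_a^{σ_a}`, the right-hand side
factorizes into `∏ₐ ∑ᵢ i^{σ_a} sᵢ`, and `i^σ ≤ Δ^{σ-1} i²` for `i ≤ Δ`.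
-/

namespace Paper.PlaneTree

open Finset Nat

lemma numChild_node_cons {us : List PlaneTree} {n : ℕ} {t : PlaneTree} (h : us[n]? = some t)
    (p : List ℕ) : numChild (node us) (n :: p) = numChild t p := by
  simp [numChild, subtreeAt, h]

lemma length_filter_posF (i : ℕ) (ts : List PlaneTree) :
    ∀ (us : List PlaneTree) (n : ℕ), (∀ k, ts[k]? = us[n + k]?) →
      ((posF n ts).filter fun p => numChild (node us) p = i).length = ecdF ts i := by
  induction ts with
  | nil => simp [posF, ecdF]
  | cons t ts ih =>
    intro us n h
    have ht : us[n]? = some t := by simpa using (h 0).symm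
    have hts := ih us (n + 1) fun k => by simpa [Nat.add_assoc, Nat.add_comm 1] using h (k + 1)
    rw [posF, List.filter_append, List.length_append, List.filter_map, List.length_map, hts]
    simp [Function.comp_def, numChild_node_cons ht, ecd, ecdF]

lemma ecd_node (ts : List PlaneTree) (i : ℕ) :
    ecd (node ts) i = (if ts.length = i then 1 else 0) + ecdF ts i := by
  rw [ecd, pos, List.filter_cons, ← length_filter_posF i ts ts 0 (by simp)]
  split_ifs <;> simp_all [numChild, subtreeAt, deg]
  omega

lemma ecdF_cons (t : PlaneTree) (l : List PlaneTree) (i : ℕ) :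
    ecdF (t :: l) i = ecd t i + ecdF l i := by simp [ecdF]

lemma ecdF_append (l₁ l₂ : List PlaneTree) (i : ℕ) :
    ecdF (l₁ ++ l₂) i = ecdF l₁ i + ecdF l₂ i := by simp [ecdF]

lemma ecdF_node_cons (ts l : List PlaneTree) (i : ℕ) :
    ecdF (node ts :: l) i = (if ts.length = i then 1 else 0) + ecdF (ts ++ l) i := by
  rw [ecdF_cons, ecd_node, ecdF_append]; ring

lemma ecdF_eq_of_perm {l₁ l₂ : List PlaneTree} (h : l₁.Perm l₂) (i : ℕ) :
    ecdF l₁ i = ecdF l₂ i :=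
  (h.map _).sum_eq

lemma sum_mul_ecdF_node_cons {K : ℕ} (g : ℕ → ℕ) {ts : List PlaneTree} (l : List PlaneTree)
    (hts : ts.length < K) :
    ∑ i ∈ range K, g i * ecdF (node ts :: l) i
      = g ts.length + ∑ i ∈ range K, g i * ecdF (ts ++ l) i := by
  simp only [ecdF_node_cons, mul_add, mul_ite, mul_one, mul_zero, sum_add_distrib, sum_ite_eq,
    mem_range, hts, if_true]

lemma sizeOf_append_le (l₁ l₂ : List PlaneTree) : sizeOf (l₁ ++ l₂) ≤ sizeOf l₁ + sizeOf l₂ := by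
  induction l₁ with
  | nil => simp
  | cons a l ih => simp only [List.cons_append, List.cons.sizeOf_spec]; omega

theorem sum_ecdF_eq_length_add_sum_mul (K : ℕ) :
    ∀ l : List PlaneTree, (∀ i, K ≤ i → ecdF l i = 0) →
      ∑ i ∈ range K, ecdF l i = l.length + ∑ i ∈ range K, i * ecdF l i
  | [], _ => by simp [ecdF]
  | node ts :: l, hK => by
    have hts : ts.length < K := by
      by_contra h
      have := hK ts.length (by omega)
      simp [ecdF_node_cons] at this
    have ih := sum_ecdF_eq_length_add_sum_mul K (ts ++ l) fun i hi => by
      have := hK i hi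
      rw [ecdF_node_cons] at this
      omega
    have h1 := sum_mul_ecdF_node_cons (fun _ => 1) l hts
    have h2 := sum_mul_ecdF_node_cons id l hts
    simp only [one_mul, id] at h1 h2
    simp only [List.length_append, List.length_cons] at ih ⊢
    omega
termination_by l => sizeOf l
decreasing_by
  have := sizeOf_append_le ts l
  simp only [List.cons.sizeOf_spec, PlaneTree.node.sizeOf_spec]
  omega

lemma one_le_ecd_deg (t : PlaneTree) : 1 ≤ ecd t (deg t) := by
  cases t
  simp [ecd_node, deg]

lemma ecd_le_ecdF {t : PlaneTree} {l : List PlaneTree} (ht : t ∈ l) (i : ℕ) :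
    ecd t i ≤ ecdF l i :=
  List.le_sum_of_mem (List.mem_map_of_mem ht)

lemma rootDeg_eq_deg_getElem {f : List PlaneTree} {q : ℕ} (hq : q < f.length) :
    rootDeg f q = deg f[q] := by
  rw [rootDeg, List.getD_eq_getElem _ _ hq]

lemma ne_zero_of_rootDeg {s : ℕ → ℕ} {f : List PlaneTree} (hf : f ∈ forestSet s) {q : ℕ}
    (hq : q < f.length) : s (rootDeg f q) ≠ 0 := by
  rw [← hf, rootDeg_eq_deg_getElem hq, ← Nat.one_le_iff_ne_zero]
  exact (one_le_ecd_deg _).trans (ecd_le_ecdF (List.getElem_mem hq) _)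

/-- `s` vanishes from `K` on, and its forests have `m` vertices and `z` roots. -/
def IsECD (K m z : ℕ) (s : ℕ → ℕ) : Prop :=
  (∀ i, K ≤ i → s i = 0) ∧ ∑ i ∈ range K, s i = m ∧ m = z + ∑ i ∈ range K, i * s i

def rootCount {r : ℕ} (d : Fin r → ℕ) : ℕ → ℕ := ∑ a, Pi.single (d a) 1

lemma rootCount_succ {r : ℕ} (d : Fin (r + 1) → ℕ) :
    rootCount d = Pi.single (d 0) 1 + rootCount (Fin.tail d) :=
  Fin.sum_univ_succ _

lemma rootCount_const_one (i : ℕ) : rootCount (fun _ : Fin 1 => i) = Pi.single i 1 := by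
  simp [rootCount]

lemma sum_rootCount_smul {r K : ℕ} {d : Fin r → ℕ} (hd : ∀ a, d a < K) {M : Type*}
    [AddCommMonoid M] (g : ℕ → M) :
    ∑ v ∈ range K, rootCount d v • g v = ∑ a, g (d a) := by
  simp only [rootCount, Finset.sum_apply, sum_smul, Pi.single_apply, ite_smul, one_smul,
    zero_smul]
  rw [Finset.sum_comm]
  exact sum_congr rfl fun a _ => by simp [hd a]

lemma prod_pow_rootCount {r K : ℕ} {d : Fin r → ℕ} (hd : ∀ a, d a < K) {M : Type*}
    [CommMonoid M] (g : ℕ → M) :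
    ∏ v ∈ range K, g v ^ rootCount d v = ∏ a, g (d a) := by
  simp only [rootCount, Finset.sum_apply, ← prod_pow_eq_pow_sum, Pi.single_apply, pow_ite, pow_one,
    pow_zero]
  rw [Finset.prod_comm]
  exact prod_congr rfl fun a _ => by simp [hd a]

lemma sum_rootCount {r K : ℕ} {d : Fin r → ℕ} (hd : ∀ a, d a < K) :
    ∑ v ∈ range K, rootCount d v = r := by
  simpa using sum_rootCount_smul hd (fun _ => (1 : ℕ))

lemma sum_mul_rootCount {r K : ℕ} {d : Fin r → ℕ} (hd : ∀ a, d a < K) :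
    ∑ v ∈ range K, v * rootCount d v = ∑ a, d a := by
  simpa [mul_comm] using sum_rootCount_smul hd id

lemma one_le_rootCount {r : ℕ} (d : Fin r → ℕ) (a : Fin r) : 1 ≤ rootCount d (d a) := by
  simp only [rootCount, Finset.sum_apply]
  refine le_trans ?_ (single_le_sum (f := fun b => (Pi.single (d b) 1 : ℕ → ℕ) (d a))
    (fun _ _ => Nat.zero_le _) (mem_univ a))
  simp

lemma ne_zero_of_rootCount_le {r : ℕ} {d : Fin r → ℕ} {s : ℕ → ℕ} (h : rootCount d ≤ s)
    (a : Fin r) : s (d a) ≠ 0 :=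
  Nat.one_le_iff_ne_zero.mp ((one_le_rootCount d a).trans (h _))

lemma single_le_of_ne_zero {s : ℕ → ℕ} {i : ℕ} (hi : s i ≠ 0) : Pi.single i 1 ≤ s := by
  intro v
  by_cases hv : v = i
  · subst hv; simpa [Nat.one_le_iff_ne_zero] using hi
  · simp [hv]

namespace IsECD

variable {K m z : ℕ} {s : ℕ → ℕ}

lemma length_eq (hs : IsECD K m z s) {f : List PlaneTree} (hf : f ∈ forestSet s) :
    f.length = z := by
  obtain ⟨hK, hm, hz⟩ := hs
  have hf' : ∀ i, ecdF f i = s i := hf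
  have := sum_ecdF_eq_length_add_sum_mul K f fun i hi => by rw [hf', hK i hi]
  simp only [hf'] at this
  omega

lemma lt_of_ne_zero (hs : IsECD K m z s) {i : ℕ} (hi : s i ≠ 0) : i < K := by
  by_contra h
  exact hi (hs.1 i (by omega))

lemma tsub (hs : IsECD K m z s) {c : ℕ → ℕ} (hc : c ≤ s)
    (hcz : ∑ i ∈ range K, c i ≤ z + ∑ i ∈ range K, i * c i) :
    IsECD K (m - ∑ i ∈ range K, c i) (z + ∑ i ∈ range K, i * c i - ∑ i ∈ range K, c i)
      (s - c) := by
  obtain ⟨hK, hm, hz⟩ := hs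
  have hsub : ∑ i ∈ range K, i * (s - c) i
      = ∑ i ∈ range K, i * s i - ∑ i ∈ range K, i * c i := by
    simp only [Pi.sub_apply, Nat.mul_sub]
    exact sum_tsub_distrib _ fun i _ => Nat.mul_le_mul_left i (hc i)
  have hle : ∑ i ∈ range K, i * c i ≤ ∑ i ∈ range K, i * s i :=
    sum_le_sum fun i _ => Nat.mul_le_mul_left i (hc i)
  refine ⟨fun i hi => by simp [hK i hi], ?_, ?_⟩
  · simp only [Pi.sub_apply]
    rw [sum_tsub_distrib _ fun i _ => hc i, hm]
  · rw [hsub]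
    omega

lemma tsub_rootCount (hs : IsECD K m z s) {r : ℕ} {d : Fin r → ℕ} (hd : rootCount d ≤ s)
    (hrz : r ≤ z) : IsECD K (m - r) (z + ∑ a, d a - r) (s - rootCount d) := by
  have hdK : ∀ a, d a < K := fun a => hs.lt_of_ne_zero (ne_zero_of_rootCount_le hd a)
  have h := hs.tsub hd (by rw [sum_rootCount hdK]; omega)
  rwa [sum_rootCount hdK, sum_mul_rootCount hdK] at h

lemma tsub_single (hs : IsECD K m z s) {i : ℕ} (hi : s i ≠ 0) (hz : 0 < z) :
    IsECD K (m - 1) (z + i - 1) (s - Pi.single i 1) := by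
  have h := hs.tsub_rootCount (d := fun _ : Fin 1 => i)
    (by rw [rootCount_const_one]; exact single_le_of_ne_zero hi) hz
  simpa [rootCount_const_one] using h

end IsECD

def children : PlaneTree → List PlaneTree
  | node ts => ts

def removeRoot (q : ℕ) (f : List PlaneTree) : List PlaneTree :=
  f.eraseIdx q ++ children (f.getD q (node []))

/-- The inverse of `removeRoot q` on forests with `n + 1` roots. -/
def insertRoot (q n : ℕ) (g : List PlaneTree) : List PlaneTree :=
  (g.take n).insertIdx q (node (g.drop n))

section removeRoot

variable {f g : List PlaneTree} {q n : ℕ}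

lemma ecdF_eq_add_ecdF_removeRoot (hq : q < f.length) (i : ℕ) :
    ecdF f i = (if rootDeg f q = i then 1 else 0) + ecdF (removeRoot q f) i := by
  rw [← ecdF_eq_of_perm (List.getElem_cons_eraseIdx_perm hq), removeRoot,
    List.getD_eq_getElem _ _ hq, rootDeg_eq_deg_getElem hq]
  generalize f[q] = t
  rcases t with ⟨ts⟩
  simp only [ecdF_cons, ecd_node, ecdF_append, children, deg]
  by_cases h : ts.length = i <;> simp [h] <;> omega

lemma rootDeg_removeRoot {b : ℕ} (hqb : q < b) (hb : b < f.length) :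
    rootDeg (removeRoot q f) (b - 1) = rootDeg f b := by
  have hlen : b - 1 < (f.eraseIdx q).length := by
    rw [List.length_eraseIdx_of_lt (by omega)]; omega
  rw [rootDeg, removeRoot, List.getD_append _ _ _ _ hlen, List.getD_eq_getElem _ _ hlen,
    List.getElem_eraseIdx_of_ge hlen (by omega), rootDeg_eq_deg_getElem hb]
  congr 2
  omega

lemma insertRoot_removeRoot (hq : q < f.length) :
    insertRoot q (f.length - 1) (removeRoot q f) = f := by
  have hlen : (f.eraseIdx q).length = f.length - 1 := List.length_eraseIdx_of_lt hq
  rw [insertRoot, removeRoot, List.getD_eq_getElem _ _ hq, ← hlen, List.take_left',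
    List.drop_left']
  · generalize ht : f[q] = t
    cases t
    rw [children, ← ht, List.insertIdx_eraseIdx_getElem hq]
  all_goals rfl

lemma length_insertRoot (hqn : q ≤ n) (hn : n ≤ g.length) :
    (insertRoot q n g).length = n + 1 := by
  simp [insertRoot, List.length_insertIdx, hn, hqn]

lemma removeRoot_insertRoot (hqn : q ≤ n) (hn : n ≤ g.length) :
    removeRoot q (insertRoot q n g) = g := by
  have hq : q < (insertRoot q n g).length := by
    rw [length_insertRoot hqn hn]; omega
  rw [removeRoot, List.getD_eq_getElem _ _ hq]
  simp only [insertRoot, List.eraseIdx_insertIdx_self, List.getElem_insertIdx_self, children,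
    List.take_append_drop]

lemma rootDeg_insertRoot (hqn : q ≤ n) (hn : n ≤ g.length) :
    rootDeg (insertRoot q n g) q = g.length - n := by
  have hq : q < (insertRoot q n g).length := by rw [length_insertRoot hqn hn]; omega
  rw [rootDeg_eq_deg_getElem hq]
  simp only [insertRoot, List.getElem_insertIdx_self, deg, List.length_drop]

end removeRoot

theorem bijOn_removeRoot {K m z : ℕ} {s : ℕ → ℕ} (hs : IsECD K m z s) {q i : ℕ} (hq : q < z)
    (hi : s i ≠ 0) :
    Set.BijOn (removeRoot q) {f ∈ forestSet s | rootDeg f q = i}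
      (forestSet (s - Pi.single i 1)) := by
  have hlen' : ∀ g ∈ forestSet (s - Pi.single i 1), g.length = z + i - 1 :=
    fun g hg => (hs.tsub_single hi (by omega)).length_eq hg
  refine Set.InvOn.bijOn (f' := insertRoot q (z - 1)) ⟨?_, ?_⟩ ?_ ?_
  · rintro f ⟨hf, -⟩
    rw [← hs.length_eq hf]
    exact insertRoot_removeRoot (by rw [hs.length_eq hf]; exact hq)
  · intro g hg
    exact removeRoot_insertRoot (by omega) (by rw [hlen' g hg]; omega)
  · rintro f ⟨hf, hfq⟩ v
    have := ecdF_eq_add_ecdF_removeRoot (by rw [hs.length_eq hf]; exact hq) v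
    rw [hf v, hfq] at this
    by_cases hv : v = i
    · subst hv; simp at this ⊢; omega
    · simp [hv, Ne.symm hv] at this ⊢; omega
  · intro g hg
    have hg' := hlen' g hg
    have hqn : q ≤ z - 1 := by omega
    have hn : z - 1 ≤ g.length := by omega
    have hlen := length_insertRoot hqn hn
    have hdeg : rootDeg (insertRoot q (z - 1) g) q = i := by
      rw [rootDeg_insertRoot hqn hn]; omega
    refine ⟨fun v => ?_, hdeg⟩
    rw [ecdF_eq_add_ecdF_removeRoot (q := q) (by omega), removeRoot_insertRoot hqn hn, hg v,
      hdeg]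
    by_cases hv : v = i
    · subst hv; simp; omega
    · simp [hv, Ne.symm hv]

lemma prod_factorial_eq_prod_factorial_tsub_mul {s c : ℕ → ℕ} (hc : c ≤ s) (K : ℕ) :
    ∏ v ∈ range K, (s v)!
      = (∏ v ∈ range K, ((s - c) v)!) * ∏ v ∈ range K, (s v).descFactorial (c v) := by
  rw [← prod_mul_distrib]
  exact prod_congr rfl fun v _ => (factorial_mul_descFactorial (hc v)).symm

lemma prod_descFactorial_single (s : ℕ → ℕ) {i K : ℕ} (hi : i < K) :
    ∏ v ∈ range K, (s v).descFactorial ((Pi.single i 1 : ℕ → ℕ) v) = s i := by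
  simp [Pi.single_apply, apply_ite, prod_ite_eq', hi]

namespace IsECD

variable {K m z : ℕ} {s : ℕ → ℕ}

lemma forestSet_eq_singleton_nil (hs : IsECD K 0 z s) : forestSet s = {[]} := by
  obtain ⟨hK, hm, hz⟩ := hs
  have hs0 : ∀ i, s i = 0 := fun i => by
    by_cases hi : i < K
    · exact (sum_eq_zero_iff.mp hm) i (mem_range.mpr hi)
    · exact hK i (by omega)
  ext f
  refine ⟨fun hf => ?_, fun hf => by simp [Set.mem_singleton_iff.mp hf, forestSet, ecdF, hs0]⟩
  have := IsECD.length_eq ⟨hK, hm, hz⟩ hf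
  exact List.length_eq_zero_iff.mp (by omega)

lemma forestSet_eq_empty (hs : IsECD K m 0 s) (hm : m ≠ 0) : forestSet s = ∅ := by
  refine Set.eq_empty_of_forall_notMem fun f hf => hm ?_
  have hnil : f = [] := List.length_eq_zero_iff.mp (hs.length_eq hf)
  rw [← hs.2.1]
  exact sum_eq_zero fun i _ => by rw [← hf i, hnil]; rfl

lemma sum_mul_add_sub_one (hs : IsECD K m z s) (hz : 0 < z) :
    ∑ i ∈ range K, s i * (z + i - 1) = z * (m - 1) := by
  obtain ⟨-, hm, hE⟩ := hs
  obtain ⟨z, rfl⟩ : ∃ z', z = z' + 1 := ⟨z - 1, by omega⟩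
  have hsplit : ∀ i, s i * (z + 1 + i - 1) = z * s i + i * s i := fun i => by
    rw [show z + 1 + i - 1 = z + i by omega]; ring
  simp only [hsplit, sum_add_distrib, ← mul_sum, hm]
  subst hE
  rw [show z + 1 + ∑ i ∈ range K, i * s i - 1 = z + ∑ i ∈ range K, i * s i by omega]
  ring

end IsECD

lemma ncard_rootDeg_mul_prod_factorial {K m z : ℕ} {s : ℕ → ℕ} (hs : IsECD K m z s) {q : ℕ}
    (hq : q < z) (i : ℕ) :
    {f ∈ forestSet s | rootDeg f q = i}.ncard * ∏ v ∈ range K, (s v)!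
      = s i * ((forestSet (s - Pi.single i 1)).ncard
          * ∏ v ∈ range K, ((s - Pi.single i 1 : ℕ → ℕ) v)!) := by
  by_cases hi : s i = 0
  · have hempty : {f ∈ forestSet s | rootDeg f q = i} = ∅ := by
      refine Set.eq_empty_of_forall_notMem fun f ⟨hf, hfq⟩ => ?_
      exact ne_zero_of_rootDeg hf (q := q) (by rw [hs.length_eq hf]; exact hq) (hfq ▸ hi)
    simp [hempty, hi]
  · rw [(bijOn_removeRoot hs hq hi).ncard_eq,
      prod_factorial_eq_prod_factorial_tsub_mul (single_le_of_ne_zero hi),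
      prod_descFactorial_single s (hs.lt_of_ne_zero hi)]
    ring

lemma ncard_eq_sum_ncard_rootDeg {K m z : ℕ} {s : ℕ → ℕ} (hs : IsECD K m z s)
    (hfin : (forestSet s).Finite) {q : ℕ} (hq : q < z) :
    (forestSet s).ncard = ∑ i ∈ range K, {f ∈ forestSet s | rootDeg f q = i}.ncard := by
  have hmaps : Set.MapsTo (fun f => rootDeg f q) ↑hfin.toFinset ↑(range K) := fun f hf => by
    rw [Set.Finite.coe_toFinset] at hf
    exact mem_range.mpr <| hs.lt_of_ne_zero <|
      ne_zero_of_rootDeg hf (by rw [hs.length_eq hf]; exact hq)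
  rw [Set.ncard_eq_toFinset_card _ hfin, card_eq_sum_card_fiberwise hmaps]
  refine sum_congr rfl fun i _ => ?_
  rw [← Set.ncard_coe_finset]
  congr 1
  ext f
  simp

/-- The case `m = 0`, where `F_s = {[]}`, is part of the statement so that the induction on `m`
closes. -/
theorem ncard_forestSet_mul_prod_factorial {K m z : ℕ} {s : ℕ → ℕ} (hs : IsECD K m z s)
    (hfin : (forestSet s).Finite) :
    (forestSet s).ncard * ∏ v ∈ range K, (s v)! = if m = 0 then 1 else z * (m - 1)! := by
  induction m generalizing s z with
  | zero =>
    rw [hs.forestSet_eq_singleton_nil, Set.ncard_singleton, if_pos rfl, one_mul]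
    exact prod_eq_one fun v hv => by
      rw [(sum_eq_zero_iff.mp hs.2.1) v hv, factorial_zero]
  | succ n ih =>
    rcases Nat.eq_zero_or_pos z with rfl | hz
    · simp [hs.forestSet_eq_empty (succ_ne_zero n)]
    have hfiber : ∀ i ∈ range K,
        {f ∈ forestSet s | rootDeg f 0 = i}.ncard * ∏ v ∈ range K, (s v)!
          = s i * if n = 0 then 1 else (z + i - 1) * (n - 1)! := by
      intro i _
      rw [ncard_rootDeg_mul_prod_factorial hs hz i]
      by_cases hi : s i = 0
      · simp [hi]
      have hfin' : (forestSet (s - Pi.single i 1)).Finite :=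
        (bijOn_removeRoot hs hz hi).image_eq ▸ (hfin.subset (Set.sep_subset _ _)).image _
      rw [ih (hs.tsub_single hi hz) hfin']
    rw [ncard_eq_sum_ncard_rootDeg hs hfin hz, sum_mul, sum_congr rfl hfiber,
      if_neg (succ_ne_zero n)]
    rcases Nat.eq_zero_or_pos n with rfl | hn
    · have := hs.2.2
      simp only [if_true, mul_one, hs.2.1, zero_add, tsub_self, factorial_zero]
      omega
    · simp only [if_neg hn.ne', ← mul_assoc, ← sum_mul, hs.sum_mul_add_sub_one hz]
      rw [add_tsub_cancel_right, mul_assoc, mul_factorial_pred hn.ne']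

/-- The event `{X_{j a} = d a for all a}` for a uniform forest with ECD `s`. -/
def rootDegFiber (s : ℕ → ℕ) {r : ℕ} (j d : Fin r → ℕ) : Set (List PlaneTree) :=
  {f ∈ forestSet s | ∀ a, rootDeg f (j a) = d a}

lemma rootDegFiber_succ {K m z : ℕ} {s : ℕ → ℕ} (hs : IsECD K m z s) {r : ℕ}
    {j : Fin (r + 1) → ℕ} (hj : StrictMono j) (hjz : ∀ a, j a < z) {d : Fin (r + 1) → ℕ}
    (hd : s (d 0) ≠ 0) :
    rootDegFiber s j d = {f ∈ forestSet s | rootDeg f (j 0) = d 0}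
      ∩ removeRoot (j 0) ⁻¹'
          rootDegFiber (s - Pi.single (d 0) 1) (fun a => j a.succ - 1) (Fin.tail d) := by
  have hshift : ∀ f ∈ forestSet s, ∀ a : Fin r,
      rootDeg (removeRoot (j 0) f) (j a.succ - 1) = rootDeg f (j a.succ) := fun f hf a =>
    rootDeg_removeRoot (hj (Fin.succ_pos a)) (by rw [hs.length_eq hf]; exact hjz _)
  ext f
  simp only [rootDegFiber, Set.mem_inter_iff, Set.mem_preimage, Set.mem_ofPred_eq,
    Fin.forall_fin_succ]
  constructor
  · rintro ⟨hf, hf0, hfs⟩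
    refine ⟨⟨hf, hf0⟩, (bijOn_removeRoot hs (hjz 0) hd).mapsTo ⟨hf, hf0⟩, fun a => ?_⟩
    rw [hshift f hf]
    exact hfs a
  · rintro ⟨⟨hf, hf0⟩, -, hfs⟩
    refine ⟨hf, hf0, fun a => ?_⟩
    rw [← hshift f hf]
    exact hfs a

/-- Peeling off the prescribed roots one at a time, from left to right. -/
theorem ncard_rootDegFiber {K m z : ℕ} {s : ℕ → ℕ} (hs : IsECD K m z s) {r : ℕ}
    {j : Fin r → ℕ} (hj : StrictMono j) (hjz : ∀ a, j a < z) (d : Fin r → ℕ) :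
    (rootDegFiber s j d).ncard
      = if rootCount d ≤ s then (forestSet (s - rootCount d)).ncard else 0 := by
  induction r generalizing m z s with
  | zero => simp [rootDegFiber, rootCount]
  | succ r ih =>
    have hz : 0 < z := (Nat.zero_le _).trans_lt (hjz 0)
    by_cases hi : s (d 0) = 0
    · have hempty : rootDegFiber s j d = ∅ := by
        refine Set.eq_empty_of_forall_notMem fun f ⟨hf, hfd⟩ => ?_
        exact ne_zero_of_rootDeg hf (q := j 0) (by rw [hs.length_eq hf]; exact hjz 0)
          (hfd 0 ▸ hi)
      rw [hempty, Set.ncard_empty, if_neg fun h => ne_zero_of_rootCount_le h 0 hi]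
    have bij := bijOn_removeRoot hs (hjz 0) hi
    have hj' : StrictMono fun a : Fin r => j a.succ - 1 := fun a b hab => by
      have := hj (Fin.succ_lt_succ_iff.mpr hab)
      have := hj (Fin.succ_pos a)
      dsimp only
      omega
    have hj'z : ∀ a : Fin r, j a.succ - 1 < z + d 0 - 1 := fun a => by
      have := hjz a.succ
      have := hj (Fin.succ_pos a)
      omega
    rw [rootDegFiber_succ hs hj hjz hi, ← (bij.injOn.mono Set.inter_subset_left).ncard_image,
      Set.image_inter_preimage, bij.image_eq, Set.inter_eq_right.mpr fun _ hg => hg.1,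
      ih (hs.tsub_single hi hz) hj' hj'z, rootCount_succ, tsub_tsub,
      le_tsub_iff_left (single_le_of_ne_zero hi)]

lemma pow_tsub_mul_factorial_le {m r : ℕ} (h : r < m) :
    (m - r) ^ r * (m - r - 1)! ≤ (m - 1)! := by
  rw [← factorial_mul_descFactorial (show r ≤ m - 1 by omega), mul_comm,
    show m - 1 - r = m - r - 1 by omega]
  have := pow_sub_le_descFactorial (m - 1) r
  rw [show m - 1 + 1 - r = m - r by omega] at this
  exact Nat.mul_le_mul_left _ this

lemma prod_factorial_le_mul_prod {s : ℕ → ℕ} {K r : ℕ} {d : Fin r → ℕ} (hd : rootCount d ≤ s)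
    (hdK : ∀ a, d a < K) :
    ∏ v ∈ range K, (s v)! ≤ (∏ v ∈ range K, ((s - rootCount d) v)!) * ∏ a, s (d a) := by
  rw [prod_factorial_eq_prod_factorial_tsub_mul hd, ← prod_pow_rootCount hdK]
  gcongr with v
  exact descFactorial_le_pow _ _

theorem ncard_rootDegFiber_mul_le {K m z Δ : ℕ} {s : ℕ → ℕ} (hs : IsECD K m z s)
    (hΔ : ∀ i, Δ < i → s i = 0) (hfin : (forestSet s).Finite) {r : ℕ} (hr : 1 ≤ r)
    (hrz : r ≤ z) (hrm : 2 * r ≤ m) {j : Fin r → ℕ} (hj : StrictMono j) (hjz : ∀ a, j a < z)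
    (d : Fin r → ℕ) :
    (rootDegFiber s j d).ncard * (z * m ^ r)
      ≤ r * 2 ^ r * (z + Δ) * ((forestSet s).ncard * ∏ a, s (d a)) := by
  rw [ncard_rootDegFiber hs hj hjz d]
  split_ifs with hd
  swap
  · simp
  have hdK : ∀ a, d a < K := fun a => hs.lt_of_ne_zero (ne_zero_of_rootCount_le hd a)
  have hdΔ : ∀ a, d a ≤ Δ := fun a => by
    by_contra h
    exact ne_zero_of_rootCount_le hd a (hΔ _ (by omega))
  have hs' := hs.tsub_rootCount hd hrz
  rcases (forestSet (s - rootCount d)).finite_or_infinite with hfin' | hinf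
  swap
  · simp [hinf.ncard]
  have hcount' := ncard_forestSet_mul_prod_factorial hs' hfin'
  have hcount := ncard_forestSet_mul_prod_factorial hs hfin
  rw [if_neg (by omega)] at hcount hcount'
  set P' := ∏ v ∈ range K, ((s - rootCount d) v)!
  have hprod := prod_factorial_le_mul_prod hd hdK
  have hfact := pow_tsub_mul_factorial_le (show r < m by omega)
  have hroots : z + ∑ a, d a - r ≤ r * (z + Δ) := by
    have : ∑ a, d a ≤ r * Δ := (sum_le_sum fun a _ => hdΔ a).trans_eq (by simp)
    have : z ≤ r * z := Nat.le_mul_of_pos_left z hr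
    rw [mul_add]
    omega
  have hm : m ^ r ≤ 2 ^ r * (m - r) ^ r := by
    rw [← mul_pow]
    exact Nat.pow_le_pow_left (by omega) r
  refine Nat.le_of_mul_le_mul_right ?_ (prod_pos fun v _ => factorial_pos _ : 0 < P')
  calc (forestSet (s - rootCount d)).ncard * (z * m ^ r) * P'
      = z * m ^ r * ((forestSet (s - rootCount d)).ncard * P') := by ring
    _ ≤ z * (2 ^ r * (m - r) ^ r) * ((z + ∑ a, d a - r) * (m - r - 1)!) := by
      rw [hcount']; gcongr
    _ = 2 ^ r * (z + ∑ a, d a - r) * (z * ((m - r) ^ r * (m - r - 1)!)) := by ring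
    _ ≤ 2 ^ r * (r * (z + Δ)) * (z * (m - 1)!) := by gcongr
    _ = r * 2 ^ r * (z + Δ) * ((forestSet s).ncard * ∏ v ∈ range K, (s v)!) := by
      rw [hcount]; ring
    _ ≤ r * 2 ^ r * (z + Δ) * ((forestSet s).ncard * (P' * ∏ a, s (d a))) := by gcongr
    _ = r * 2 ^ r * (z + Δ) * ((forestSet s).ncard * ∏ a, s (d a)) * P' := by ring

theorem ncard_rootDegFiber_div_le {K m z Δ : ℕ} {s : ℕ → ℕ} (hs : IsECD K m z s)
    (hΔ : ∀ i, Δ < i → s i = 0) (hfin : (forestSet s).Finite) {r : ℕ} (hr : 1 ≤ r)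
    (hrz : r ≤ z) (hrm : 2 * r ≤ m) {j : Fin r → ℕ} (hj : StrictMono j) (hjz : ∀ a, j a < z)
    (d : Fin r → ℕ) :
    ((rootDegFiber s j d).ncard : ℝ) / (forestSet s).ncard
      ≤ r * 2 ^ r * (1 + Δ / z) * (∏ a, (s (d a) : ℝ)) / m ^ r := by
  have hz : (0 : ℝ) < z := by exact_mod_cast (by omega : 0 < z)
  have hm : (0 : ℝ) < m := by exact_mod_cast (by omega : 0 < m)
  rcases Nat.eq_zero_or_pos (forestSet s).ncard with hF | hF
  · rw [hF, Nat.cast_zero, div_zero]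
    positivity
  have h : ((rootDegFiber s j d).ncard : ℝ) * (z * m ^ r)
      ≤ r * 2 ^ r * (z + Δ) * ((forestSet s).ncard * ∏ a, (s (d a) : ℝ)) := by
    exact_mod_cast ncard_rootDegFiber_mul_le hs hΔ hfin hr hrz hrm hj hjz d
  rw [div_le_div_iff₀ (by exact_mod_cast hF) (by positivity)]
  calc _ = ((rootDegFiber s j d).ncard : ℝ) * (z * m ^ r) / z := by
        field_simp
    _ ≤ r * 2 ^ r * (z + Δ) * ((forestSet s).ncard * ∏ a, (s (d a) : ℝ)) / z := by gcongr
    _ = _ := by field_simp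

lemma sum_prod_rootDeg_eq_sum_ncard_rootDegFiber {K m z : ℕ} {s : ℕ → ℕ} (hs : IsECD K m z s)
    (hfin : (forestSet s).Finite) {r : ℕ} {j : Fin r → ℕ} (hjz : ∀ a, j a < z)
    (g : Fin r → ℕ → ℝ) :
    ∑ f ∈ hfin.toFinset, ∏ a, g a (rootDeg f (j a))
      = ∑ y ∈ Fintype.piFinset fun _ => range K,
          ((rootDegFiber s j y).ncard : ℝ) * ∏ a, g a (y a) := by
  have hmaps : ∀ f ∈ hfin.toFinset,
      (fun a => rootDeg f (j a)) ∈ Fintype.piFinset fun _ => range K := fun f hf => by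
    rw [Set.Finite.mem_toFinset] at hf
    exact Fintype.mem_piFinset.mpr fun a => mem_range.mpr <| hs.lt_of_ne_zero <|
      ne_zero_of_rootDeg hf (by rw [hs.length_eq hf]; exact hjz a)
  rw [← sum_fiberwise_of_maps_to hmaps]
  refine sum_congr rfl fun y _ => ?_
  have hconst : ∀ f ∈ {f ∈ hfin.toFinset | (fun a => rootDeg f (j a)) = y},
      ∏ a, g a (rootDeg f (j a)) = ∏ a, g a (y a) := fun f hf =>
    prod_congr rfl fun a _ => by rw [← (mem_filter.mp hf).2]
  rw [sum_congr rfl hconst, sum_const, nsmul_eq_mul, ← Set.ncard_coe_finset]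
  congr 3
  ext f
  simp [rootDegFiber, funext_iff]

lemma sum_pow_mul_le {s : ℕ → ℕ} {Δ σ : ℕ} (hΔ : ∀ i, Δ < i → s i = 0) (hσ : 1 ≤ σ) (K : ℕ) :
    ∑ i ∈ range K, (i : ℝ) ^ σ * s i ≤ Δ ^ (σ - 1) * ∑ i ∈ range K, (i : ℝ) ^ 2 * s i := by
  rw [mul_sum]
  refine sum_le_sum fun i _ => ?_
  by_cases hi : i ≤ Δ
  · have : i ^ σ ≤ Δ ^ (σ - 1) * i ^ 2 := calc
      i ^ σ = i ^ (σ - 1) * i := by rw [← pow_succ, Nat.sub_add_cancel hσ]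
      _ ≤ Δ ^ (σ - 1) * i ^ 2 := by gcongr; exact Nat.le_self_pow two_ne_zero i
    rw [← mul_assoc]
    gcongr
    exact_mod_cast this
  · simp [hΔ i (by omega)]

lemma prod_sum_pow_mul_le {s : ℕ → ℕ} {Δ r : ℕ} (hΔ : ∀ i, Δ < i → s i = 0) {σ : Fin r → ℕ}
    (hσ : ∀ a, 1 ≤ σ a) (K : ℕ) :
    ∏ a, ∑ i ∈ range K, (i : ℝ) ^ σ a * s i
      ≤ Δ ^ (∑ a, σ a - r) * (∑ i ∈ range K, (i : ℝ) ^ 2 * s i) ^ r := by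
  calc ∏ a, ∑ i ∈ range K, (i : ℝ) ^ σ a * s i
      ≤ ∏ a, ((Δ : ℝ) ^ (σ a - 1) * ∑ i ∈ range K, (i : ℝ) ^ 2 * s i) := by
        gcongr with a
        exact sum_pow_mul_le hΔ (hσ a) K
    _ = _ := by
        rw [prod_mul_distrib, prod_pow_eq_pow_sum, prod_const, sum_tsub_distrib _ fun a _ => hσ a]
        simp

end Paper.PlaneTree

open Paper Paper.PlaneTree in
/-- joint moment bound for the root children counts of a uniform forest. -/
theorem forest_roots_moment_upper (s : ℕ → ℕ) (M z m Δ r : ℕ)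
    (hsupp : ∀ i, M ≤ i → s i = 0)
    (hm : m = ∑ i ∈ Finset.range M, s i)
    (hz : m = z + ∑ i ∈ Finset.range M, i * s i)
    (hz1 : 1 ≤ z)
    (hΔ : s Δ ≠ 0) (hΔ' : ∀ i, Δ < i → s i = 0)
    (hr : 1 ≤ r) (hrz : r ≤ z) (hrm : 2 * r ≤ m)
    (σ : Fin r → ℕ) (hσ : ∀ a, 1 ≤ σ a)
    (j : Fin r → ℕ) (hj : StrictMono j) (hjz : ∀ a, j a < z)
    (hfin : (forestSet s).Finite) :
    (∑ f ∈ hfin.toFinset, ∏ a, (rootDeg f (j a) : ℝ) ^ (σ a))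
        / (forestSet s).ncard
      ≤ (r : ℝ) * 2 ^ r * ((∑ i ∈ Finset.range M, (i : ℝ) ^ 2 * (s i : ℝ)) / m) ^ r
        * (1 + (Δ : ℝ) / z) * (Δ : ℝ) ^ ((∑ a, σ a) - r) := by
  have hs : IsECD M m z s := ⟨hsupp, hm.symm, hz⟩
  set C : ℝ := r * 2 ^ r * (1 + Δ / z) / m ^ r
  calc (∑ f ∈ hfin.toFinset, ∏ a, (rootDeg f (j a) : ℝ) ^ σ a) / (forestSet s).ncard
      = ∑ y ∈ Fintype.piFinset fun _ => Finset.range M,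
          ((rootDegFiber s j y).ncard / (forestSet s).ncard : ℝ)
            * ∏ a, (y a : ℝ) ^ σ a := by
        rw [sum_prod_rootDeg_eq_sum_ncard_rootDegFiber hs hfin hjz fun a i => (i : ℝ) ^ σ a,
          Finset.sum_div]
        simp only [div_mul_eq_mul_div]
    _ ≤ ∑ y ∈ Fintype.piFinset fun _ => Finset.range M,
          C * (∏ a, (s (y a) : ℝ)) * ∏ a, (y a : ℝ) ^ σ a := by
        gcongr with y
        exact (ncard_rootDegFiber_div_le hs hΔ' hfin hr hrz hrm hj hjz y).trans_eq (by ring)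
    _ = C * ∏ a, ∑ i ∈ Finset.range M, (i : ℝ) ^ σ a * s i := by
        rw [Finset.prod_univ_sum, Finset.mul_sum]
        refine Finset.sum_congr rfl fun y _ => ?_
        rw [Finset.prod_mul_distrib]
        ring
    _ ≤ C * ((Δ : ℝ) ^ ((∑ a, σ a) - r) * (∑ i ∈ Finset.range M, (i : ℝ) ^ 2 * s i) ^ r) := by
        gcongr
        exact prod_sum_pow_mul_le hΔ' hσ M
    _ = _ := by
        rw [div_pow]
        ring
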